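/- arXiv:1906.09067 — 3 statements merged into one kernel-verified Lean document; each statement's English description precedes it below -/
import Mathlib

section
/- For the embezzling state |σ_M⟩ = (1/√C(M)) Σ_{j=1}^M (1/√j)|j⟩ with C(M) = Σ_{j=1}^M 1/j, and the state |ω⟩ on an M×N-dimensional space whose coefficients are those of |σ_M⟩⊗|Ψ_N⟩ (where |Ψ_N⟩ = (1/√N)Σ_{i=1}^N |i⟩) rearranged in non-increasing order, the fidelity satisfies F(|σ_M⟩⊗|1⟩, |ω⟩) ≥ 1 - (1 + log₂ N)/(1 + log₂ M). -/
open Finset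

/-- Normalization factor `C(M) = ∑_{j=1}^M 1/j` of the embezzling state. -/
noncomputable def embNorm (M : ℕ) : ℝ := ∑ j ∈ Icc 1 M, (1 : ℝ) / j

lemma embNorm_eq_harmonic (M : ℕ) : embNorm M = (harmonic M : ℝ) := by
  rw [embNorm, harmonic_eq_sum_Icc]
  push_cast
  simp [one_div]

lemma log_succ_sub (n : ℕ) (hn : 1 ≤ n) :
    (1:ℝ)/(n+1) ≤ Real.log (n+1) - Real.log n := by
  have hn0 : (0:ℝ) < n := by exact_mod_cast hn
  have h := Real.log_le_sub_one_of_pos (x := (n:ℝ)/(n+1)) (by positivity)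
  rw [Real.log_div (by positivity) (by positivity)] at h
  have : (n:ℝ)/(n+1) - 1 = -(1/(n+1)) := by field_simp; ring
  linarith [this ▸ h]

lemma harmonic_le_log (M : ℕ) (h : 5 ≤ M) : (harmonic M : ℝ) ≤ Real.log (2*M) := by
  induction M, h using Nat.le_induction with
  | base =>
    have h2 : (2:ℝ)^33 ≤ 10^10 := by norm_num
    have h3 : 33 * Real.log 2 ≤ 10 * Real.log 10 := by
      have := Real.log_le_log (by positivity) h2
      rwa [Real.log_pow, Real.log_pow] at this
    have h4 := Real.log_two_gt_d9
    norm_num [harmonic]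
    linarith
  | succ n hn ih =>
    have hn0 : (0:ℝ) < n := by exact_mod_cast (by omega : 0 < n)
    rw [harmonic_succ]
    have h1 := log_succ_sub n (by omega)
    have h2 : Real.log (2*((n:ℝ)+1)) = Real.log 2 + Real.log ((n:ℝ)+1) := by
      rw [Real.log_mul (by norm_num) (by positivity)]
    have h3 : Real.log (2*(n:ℝ)) = Real.log 2 + Real.log n := by
      rw [Real.log_mul (by norm_num) (by positivity)]
    push_cast
    push_cast at ih
    rw [h2]
    rw [h3] at ih
    rw [one_div] at h1
    linarith

lemma key_ineq (M N : ℕ) (hN : 1 ≤ N) (hMN : N ≤ M) :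
    (harmonic M : ℝ) * Real.log ((M:ℝ)/N) ≤ (harmonic (M/N) : ℝ) * Real.log (2*M) := by
  have hM1 : 1 ≤ M := le_trans hN hMN
  have hMpos : (0:ℝ) < M := by exact_mod_cast hM1
  have hM1R : (1:ℝ) ≤ M := by exact_mod_cast hM1
  have hNpos : (0:ℝ) < N := by exact_mod_cast hN
  have hlog2M : (0:ℝ) ≤ Real.log (2*M) := Real.log_nonneg (by linarith)
  have ha1 : 1 ≤ M/N := (Nat.one_le_div_iff (by omega)).mpr hMN
  have haR : (0:ℝ) ≤ (harmonic (M/N) : ℝ) := by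
    exact_mod_cast (harmonic_pos (by omega)).le
  rcases eq_or_lt_of_le hMN with rfl | hlt
  · rw [div_self (ne_of_gt hMpos), Real.log_one, mul_zero]
    positivity
  · -- N < M
    have hMN1 : (1:ℝ) ≤ (M:ℝ)/N := by
      rw [le_div_iff₀ hNpos, one_mul]; exact_mod_cast hMN
    have hlogMN0 : 0 ≤ Real.log ((M:ℝ)/N) := Real.log_nonneg hMN1
    have hceil : Real.log ((M:ℝ)/N) ≤ (harmonic (M/N) : ℝ) := by
      have hub : (M:ℝ)/N ≤ ((M/N : ℕ) : ℝ) + 1 := by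
        rw [div_le_iff₀ hNpos]
        have h1 := Nat.div_add_mod M N
        have h2 := Nat.mod_lt M (show 0 < N by omega)
        have h3 : (M/N + 1) * N = N*(M/N) + N := by ring
        have h4 : M < (M/N + 1) * N := by omega
        calc (M:ℝ) ≤ ((M/N + 1) * N : ℕ) := by exact_mod_cast h4.le
          _ = (((M/N:ℕ):ℝ) + 1) * N := by push_cast; ring
      calc Real.log ((M:ℝ)/N) ≤ Real.log (((M/N : ℕ) : ℝ) + 1) :=
            Real.log_le_log (by positivity) hub
        _ ≤ (harmonic (M/N) : ℝ) := by
            have := log_add_one_le_harmonic (M/N)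
            push_cast at this
            exact this
    by_cases h5 : 5 ≤ M
    · have hHM := harmonic_le_log M h5
      nlinarith
    · -- M ≤ 4
      have hlog2 := Real.log_two_gt_d9
      clear hceil hlogMN0 hMN1 haR ha1 hlog2M hMpos hM1R
      interval_cases M <;> interval_cases N <;> norm_num [harmonic] <;>
      · have l4 : Real.log 4 = 2 * Real.log 2 := by
          rw [show (4:ℝ) = 2^2 by norm_num, Real.log_pow]; norm_num
        have l8 : Real.log 8 = 3 * Real.log 2 := by
          rw [show (8:ℝ) = 2^3 by norm_num, Real.log_pow]; norm_num
        have l46 : Real.log 4 ≤ Real.log 6 := Real.log_le_log (by norm_num) (by norm_num)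
        have l36 : Real.log 3 ≤ Real.log 6 := Real.log_le_log (by norm_num) (by norm_num)
        have l48 : Real.log 4 ≤ Real.log 8 := Real.log_le_log (by norm_num) (by norm_num)
        have l32 : Real.log ((3:ℝ)/2) ≤ 1/2 := by
          have := Real.log_le_sub_one_of_pos (x:=(3:ℝ)/2) (by norm_num); linarith
        have l43 : Real.log ((4:ℝ)/3) ≤ 1/3 := by
          have := Real.log_le_sub_one_of_pos (x:=(4:ℝ)/3) (by norm_num); linarith
        linarith

lemma block_sum (N : ℕ) (hN : 1 ≤ N) (a : ℕ) :
    ∑ j ∈ Icc 1 (a*N), (1:ℝ) / ((⌈(j:ℝ)/N⌉₊ : ℝ) * N) = (harmonic a : ℝ) := by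
  have hNpos : (0:ℝ) < N := by exact_mod_cast hN
  induction a with
  | zero => simp [harmonic]
  | succ a ih =>
    have hIcc : ∀ m : ℕ, Icc 1 m = Ioc 0 m := fun m => by
      rw [← Finset.Icc_add_one_left_eq_Ioc]; rfl
    rw [hIcc] at ih ⊢
    rw [← Finset.sum_Ioc_consecutive _ (Nat.zero_le (a*N))
      (by nlinarith [hN] : a*N ≤ (a+1)*N), ih, harmonic_succ]
    have hconst : ∀ j ∈ Ioc (a*N) ((a+1)*N),
        (1:ℝ) / ((⌈(j:ℝ)/N⌉₊ : ℝ) * N) = 1 / (((a:ℝ)+1) * N) := by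
      intro j hj
      rw [Finset.mem_Ioc] at hj
      have hceil : ⌈(j:ℝ)/N⌉₊ = a + 1 := by
        rw [Nat.ceil_eq_iff (by omega)]
        simp only [Nat.add_sub_cancel]
        constructor
        · rw [lt_div_iff₀ hNpos]
          exact_mod_cast hj.1
        · rw [div_le_iff₀ hNpos]
          exact_mod_cast hj.2
      rw [hceil]; push_cast; ring_nf
    rw [Finset.sum_congr rfl hconst, Finset.sum_const, Nat.card_Ioc]
    have : (a+1)*N - a*N = N := by
      have : (a+1)*N = a*N + N := by ring
      omega
    rw [this]
    push_cast
    have hN0 : (N:ℝ) ≠ 0 := hNpos.ne'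
    rw [nsmul_eq_mul]
    field_simp

/-- The fidelity `F(|σ_M⟩⊗|1⟩, |ω⟩)`, i.e. the overlap
`∑_{j=1}^M (1/√(j C(M))) · ω_j` with `ω_j = 1/√(⌈j/N⌉ N C(M))` the coefficients of
`|σ_M⟩⊗|Ψ_N⟩` sorted non-increasingly, is at least `1 - (1 + log₂ N)/(1 + log₂ M)`. -/
theorem embezzling_fidelity_bound (M N : ℕ) (hN : 1 ≤ N) (hMN : N ≤ M) :
    (∑ j ∈ Icc 1 M, (1 / Real.sqrt (j * embNorm M)) *
        (1 / Real.sqrt ((⌈(j : ℝ) / N⌉₊ : ℝ) * N * embNorm M)))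
      ≥ 1 - (1 + Real.logb 2 N) / (1 + Real.logb 2 M) := by
  have hM1 : 1 ≤ M := le_trans hN hMN
  have hMpos : (0:ℝ) < M := by exact_mod_cast hM1
  have hNpos : (0:ℝ) < N := by exact_mod_cast hN
  have hC : embNorm M = (harmonic M : ℝ) := embNorm_eq_harmonic M
  have hHMpos : (0:ℝ) < (harmonic M : ℝ) := by exact_mod_cast harmonic_pos (by omega)
  have hCpos : 0 < embNorm M := by rw [hC]; exact hHMpos
  set a := M/N with ha
  have haN : a*N ≤ M := Nat.div_mul_le_self M N
  -- Step 1: restrict the sum to `Icc 1 (a*N)`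
  have hstep1 : ∑ j ∈ Icc 1 (a*N), (1 / Real.sqrt (j * embNorm M)) *
        (1 / Real.sqrt ((⌈(j : ℝ) / N⌉₊ : ℝ) * N * embNorm M))
      ≤ ∑ j ∈ Icc 1 M, (1 / Real.sqrt (j * embNorm M)) *
        (1 / Real.sqrt ((⌈(j : ℝ) / N⌉₊ : ℝ) * N * embNorm M)) := by
    apply Finset.sum_le_sum_of_subset_of_nonneg (Finset.Icc_subset_Icc_right haN)
    intro j _ _
    positivity
  -- Step 2: termwise lower bound
  have hstep2 : ∑ j ∈ Icc 1 (a*N), ((1:ℝ) / ((⌈(j:ℝ)/N⌉₊ : ℝ) * N)) * (1 / embNorm M)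
      ≤ ∑ j ∈ Icc 1 (a*N), (1 / Real.sqrt (j * embNorm M)) *
        (1 / Real.sqrt ((⌈(j : ℝ) / N⌉₊ : ℝ) * N * embNorm M)) := by
    apply Finset.sum_le_sum
    intro j hj
    rw [Finset.mem_Icc] at hj
    have hj1 : (1:ℝ) ≤ j := by exact_mod_cast hj.1
    set k : ℝ := (⌈(j:ℝ)/N⌉₊ : ℝ) with hk
    have hk1 : (1:ℝ) ≤ k := by
      rw [hk]
      have : 0 < ⌈(j:ℝ)/N⌉₊ := Nat.ceil_pos.mpr (div_pos (by linarith) hNpos)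
      exact_mod_cast this
    have hjk : (j:ℝ) ≤ k * N := by
      have hle := Nat.le_ceil ((j:ℝ)/N)
      calc (j:ℝ) = ((j:ℝ)/N)*N := by field_simp
        _ ≤ k*N := by
            apply mul_le_mul_of_nonneg_right _ hNpos.le
            exact hle
    have hprod : Real.sqrt ((j:ℝ) * embNorm M) * Real.sqrt (k * N * embNorm M)
        ≤ (k*N) * embNorm M := by
      rw [← Real.sqrt_mul (by positivity)]
      have hsq : (j:ℝ) * embNorm M * (k * N * embNorm M) ≤ ((k*N) * embNorm M)^2 := by
        nlinarith [hCpos.le, hjk, mul_pos (mul_pos (lt_of_lt_of_le one_pos hk1) hNpos) hCpos]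
      calc Real.sqrt ((j:ℝ) * embNorm M * (k * N * embNorm M))
          ≤ Real.sqrt (((k*N) * embNorm M)^2) := Real.sqrt_le_sqrt hsq
        _ = (k*N) * embNorm M := Real.sqrt_sq (by positivity)
    have h0 : 0 < Real.sqrt ((j:ℝ) * embNorm M) * Real.sqrt (k*N*embNorm M) := by
      have hhj : (0:ℝ) < (j:ℝ) * embNorm M := by positivity
      have hhk : (0:ℝ) < k * N * embNorm M := by
        have : (0:ℝ) < k := by linarith
        positivity
      exact mul_pos (Real.sqrt_pos.mpr hhj) (Real.sqrt_pos.mpr hhk)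
    calc (1:ℝ) / (k*N) * (1/embNorm M) = 1 / ((k*N) * embNorm M) := by
          rw [div_mul_div_comm, one_mul]
      _ ≤ 1 / (Real.sqrt ((j:ℝ) * embNorm M) * Real.sqrt (k*N*embNorm M)) :=
          one_div_le_one_div_of_le h0 hprod
      _ = 1 / Real.sqrt ((j:ℝ) * embNorm M) * (1 / Real.sqrt (k*N*embNorm M)) := by
          rw [div_mul_div_comm, one_mul]
  -- Step 2': evaluate the lower-bound sum
  have hsum : ∑ j ∈ Icc 1 (a*N), ((1:ℝ) / ((⌈(j:ℝ)/N⌉₊ : ℝ) * N)) * (1 / embNorm M)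
      = (harmonic a : ℝ) / (harmonic M : ℝ) := by
    rw [← Finset.sum_mul, block_sum N hN a, hC]
    rw [mul_one_div]
  -- Step 3: the harmonic ratio bound
  have hlog2 : (0:ℝ) < Real.log 2 := Real.log_pos (by norm_num)
  have hM1R : (1:ℝ) ≤ M := by exact_mod_cast hM1
  have hlog2M : (0:ℝ) < Real.log (2*(M:ℝ)) := by
    apply Real.log_pos
    linarith
  have e1 : 1 + Real.logb 2 (N:ℝ) = Real.log (2*(N:ℝ)) / Real.log 2 := by
    rw [Real.logb, Real.log_mul (by norm_num) (ne_of_gt hNpos)]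
    field_simp
  have e2 : 1 + Real.logb 2 (M:ℝ) = Real.log (2*(M:ℝ)) / Real.log 2 := by
    rw [Real.logb, Real.log_mul (by norm_num) (ne_of_gt hMpos)]
    field_simp
  have e3 : (1 + Real.logb 2 (N:ℝ)) / (1 + Real.logb 2 (M:ℝ))
      = Real.log (2*(N:ℝ)) / Real.log (2*(M:ℝ)) := by
    rw [e1, e2, div_div_div_comm, div_self (ne_of_gt hlog2), div_one]
  have key := key_ineq M N hN hMN
  have hdiff : Real.log (2*(M:ℝ)) - Real.log (2*(N:ℝ)) = Real.log ((M:ℝ)/N) := by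
    rw [Real.log_mul (by norm_num) (ne_of_gt hMpos),
        Real.log_mul (by norm_num) (ne_of_gt hNpos),
        Real.log_div (ne_of_gt hMpos) (ne_of_gt hNpos)]
    ring
  have hratio : 1 - Real.log (2*(N:ℝ)) / Real.log (2*(M:ℝ))
      ≤ (harmonic a : ℝ) / (harmonic M : ℝ) := by
    rw [show (1:ℝ) - Real.log (2*(N:ℝ)) / Real.log (2*(M:ℝ))
        = (Real.log (2*(M:ℝ)) - Real.log (2*(N:ℝ))) / Real.log (2*(M:ℝ)) by
      field_simp]
    rw [div_le_div_iff₀ hlog2M hHMpos, hdiff]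
    linear_combination key
  rw [ge_iff_le, e3]
  calc 1 - Real.log (2*(N:ℝ)) / Real.log (2*(M:ℝ))
      ≤ (harmonic a : ℝ) / (harmonic M : ℝ) := hratio
    _ = ∑ j ∈ Icc 1 (a*N), ((1:ℝ) / ((⌈(j:ℝ)/N⌉₊ : ℝ) * N)) * (1 / embNorm M) := hsum.symm
    _ ≤ _ := le_trans hstep2 hstep1
end

section
/- For any positive integers M ≥ N ≥ 1, the ratio of harmonic numbers satisfies H(⌊M/N⌋)/H(M) ≥ 1 - (1 + log₂ N)/(1 + log₂ M), where H(k) = Σ_{i=1}^k 1/i. -/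
open Finset

/-- The `k`-th harmonic number `H(k) = ∑_{i=1}^k 1/i`. -/
noncomputable def harmonic' (k : ℕ) : ℝ := ∑ i ∈ Icc 1 k, (1 : ℝ) / i

lemma harmonic'_eq (k : ℕ) : harmonic' k = (harmonic k : ℝ) := by
  rw [harmonic_eq_sum_Icc, harmonic']
  push_cast
  simp [one_div]

lemma harmonic'_le (k : ℕ) : harmonic' k ≤ 1 + Real.log k := by
  rw [harmonic'_eq]; exact harmonic_le_one_add_log k

lemma harmonic'_lower : ∀ k : ℕ, 1 ≤ k →
    1 + Real.log (k + 1) - Real.log 2 ≤ harmonic' k := by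
  intro k hk
  induction k with
  | zero => omega
  | succ n ih =>
    rcases Nat.eq_or_lt_of_le hk with h | h
    · simp [harmonic', ← h]
      norm_num
    · have hn : 1 ≤ n := by omega
      have hrec : harmonic' (n + 1) = harmonic' n + 1 / (n + 1) := by
        rw [harmonic'_eq, harmonic'_eq, harmonic_succ]
        push_cast
        ring
      have ihn := ih hn
      have hlog : Real.log (n + 2) - Real.log (n + 1) ≤ 1 / (n + 1) := by
        have hpos : (0 : ℝ) < (n + 1 : ℝ) := by positivity
        have h1 : Real.log ((n + 2 : ℝ) / (n + 1 : ℝ)) ≤ (n + 2 : ℝ) / (n + 1 : ℝ) - 1 :=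
          Real.log_le_sub_one_of_pos (by positivity)
        rw [Real.log_div (by positivity) (by positivity)] at h1
        have : (n + 2 : ℝ) / (n + 1 : ℝ) - 1 = 1 / (n + 1 : ℝ) := by
          field_simp
          ring
        linarith
      rw [hrec]
      push_cast
      rw [show ((n : ℝ) + 1 + 1) = (n : ℝ) + 2 by ring]
      linarith

/-- For positive integers `M ≥ N ≥ 1`,
`H(⌊M/N⌋)/H(M) ≥ 1 - (1 + log₂ N)/(1 + log₂ M)`. -/
theorem harmonic_ratio_bound (M N : ℕ) (hN : 1 ≤ N) (hMN : N ≤ M) :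
    harmonic' (M / N) / harmonic' M
      ≥ 1 - (1 + Real.logb 2 N) / (1 + Real.logb 2 M) := by
  set k := M / N with hk
  have hM : 1 ≤ M := le_trans hN hMN
  have hk1 : 1 ≤ k := Nat.one_le_div_iff (by omega) |>.mpr hMN
  -- M < N * (k + 1)
  have hMlt : M < N * (k + 1) := by
    have h1 := Nat.div_add_mod M N
    have h2 : M % N < N := Nat.mod_lt _ (by omega)
    calc M = N * k + M % N := h1.symm
      _ < N * k + N := by omega
      _ = N * (k + 1) := by ring
  set a := Real.log M with ha
  set b := Real.log N with hb
  set L := Real.log 2 with hL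
  have hL0 : 0 < L := Real.log_pos (by norm_num)
  have hL1 : L < 1 := by
    have := Real.log_two_lt_d9; linarith
  have hb0 : 0 ≤ b := Real.log_natCast_nonneg N
  have hab : b ≤ a := Real.log_le_log (by positivity) (by exact_mod_cast hMN)
  -- log (k+1) ≥ a - b
  have hlogk : a - b ≤ Real.log (k + 1) := by
    have h1 : (M : ℝ) ≤ (N : ℝ) * (k + 1) := by
      have : (M : ℝ) < (N : ℝ) * (k + 1) := by exact_mod_cast hMlt
      linarith
    have h2 : a ≤ b + Real.log (k + 1) := by
      calc a ≤ Real.log ((N : ℝ) * (k + 1)) :=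
            Real.log_le_log (by positivity) h1
        _ = b + Real.log (k + 1) := Real.log_mul (by positivity) (by positivity)
    linarith
  -- bounds on harmonic numbers
  have hHk : 1 - L + (a - b) ≤ harmonic' k := by
    have := harmonic'_lower k hk1
    push_cast at this
    linarith
  have hHM : harmonic' M ≤ 1 + a := harmonic'_le M
  have hHMpos : 0 < harmonic' M := by
    rw [harmonic'_eq]
    exact_mod_cast harmonic_pos (by omega)
  have hP0 : 0 ≤ 1 - L + (a - b) := by linarith
  have hdiv : (1 - L + (a - b)) / (1 + a) ≤ harmonic' k / harmonic' M :=
    div_le_div₀ (le_trans hP0 hHk) hHk hHMpos hHM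
  -- rewrite RHS
  have hrhs : 1 - (1 + Real.logb 2 N) / (1 + Real.logb 2 M) = 1 - (L + b) / (L + a) := by
    rw [Real.logb, Real.logb, ← hb, ← ha, ← hL]
    have hLa : L + a ≠ 0 := by positivity
    have hL0' : L ≠ 0 := ne_of_gt hL0
    field_simp
  rw [ge_iff_le, hrhs]
  have key : 1 - (L + b) / (L + a) ≤ (1 - L + (a - b)) / (1 + a) := by
    rw [sub_le_iff_le_add, div_add_div _ _ (by positivity : (1:ℝ) + a ≠ 0) (by positivity : L + a ≠ 0), le_div_iff₀ (by positivity)]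
    nlinarith [mul_nonneg (sub_nonneg.mpr hL1.le) hb0]
  linarith
end

section
/- Conversely, let p be a probability vector on {1,…,r} with all entries positive, p not equal to the uniform distribution on an N-element subset extended by zeros, and suppose max_i p_i ≤ 1/N for some integer 2 ≤ N ≤ r with p having at least one entry making it non-uniform on N points. If max_i p_i < 1/N or p is not a permutation of (1/N,…,1/N,0,…,0), then S_α(p) > log₂ N for all α > 0, where the target vector q = (1/N,…,1/N,0,…,0) has Rényi entropy S_α(q) = log₂ N for all α > 0. -/
open Finset

/-- Converse direction: if `p` is a strictly positive probability vector on `{1,…,r}`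
with `r > N` (so `p` is not a permutation of the uniform vector `q = (1/N,…,1/N,0,…,0)`)
and `max_i p_i ≤ 1/N`, then `S_α(p) > log₂ N` for all `α > 0`, while the target vector
`q` has `S_α(q) = log₂ N` for all `α > 0`. -/
theorem renyi_entropy_strict_gt (r N : ℕ) (hN : 2 ≤ N) (hr : N < r)
    (p : Fin r → ℝ) (hp : ∀ i, 0 < p i) (hps : ∑ i, p i = 1)
    (hmax : ∀ i, p i ≤ 1 / N) :
    (∀ α : ℝ, 0 < α → α ≠ 1 →
      (1 / (1 - α)) * Real.logb 2 (∑ i, p i ^ α) > Real.logb 2 N) ∧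
    (∀ α : ℝ, 0 < α → α ≠ 1 →
      (1 / (1 - α)) * Real.logb 2 (∑ i : Fin r, (if (i : ℕ) < N then (1 / (N : ℝ)) else 0) ^ α)
        = Real.logb 2 N) := by
  have hN0 : (0:ℝ) < N := by positivity
  have hN1 : (1:ℝ) < N := by exact_mod_cast lt_of_lt_of_le one_lt_two hN
  have hlogN : 0 < Real.logb 2 N := Real.logb_pos one_lt_two hN1
  have hlogc : ∀ α : ℝ, Real.logb 2 ((N:ℝ) ^ (1 - α)) = (1 - α) * Real.logb 2 N := by
    intro α
    rw [Real.logb, Real.log_rpow hN0, Real.logb]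
    ring
  constructor
  · -- existence of j with p j < 1/N
    have hex : ∃ j : Fin r, p j < 1 / N := by
      by_contra h
      push_neg at h
      have heq : ∀ j, p j = 1 / (N:ℝ) := fun j => le_antisymm (hmax j) (h j)
      have hsum : (∑ i, p i) = (r : ℝ) * (1 / (N:ℝ)) := by
        simp [heq, Finset.sum_const, Finset.card_univ]
      rw [hps] at hsum
      have hrN : (N:ℝ) < r := by exact_mod_cast hr
      have : (N:ℝ) ≠ 0 := ne_of_gt hN0
      field_simp at hsum
      nlinarith
    obtain ⟨j, hj⟩ := hex
    intro α hα hα1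
    have hsplit : ∀ i : Fin r, p i ^ α = p i * p i ^ (α - 1) := by
      intro i
      rw [show α = 1 + (α - 1) by ring, Real.rpow_add (hp i), Real.rpow_one]
      ring_nf
    have hcpos : (0:ℝ) < (N:ℝ) ^ (1 - α) := Real.rpow_pos_of_pos hN0 _
    have hinv : (1 / (N:ℝ)) ^ (α - 1) = (N:ℝ) ^ (1 - α) := by
      rw [one_div, ← Real.rpow_neg_one, ← Real.rpow_mul hN0.le]
      congr 1; ring
    rcases lt_or_gt_of_ne hα1 with h1 | h1
    · -- α < 1
      have hterm : ∀ i : Fin r, p i * ((N:ℝ) ^ (1 - α)) ≤ p i ^ α := by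
        intro i
        rw [hsplit i]
        have := Real.rpow_le_rpow_of_nonpos (hp i) (hmax i) (by linarith : α - 1 ≤ 0)
        rw [hinv] at this
        exact mul_le_mul_of_nonneg_left this (hp i).le
      have hstrict : p j * ((N:ℝ) ^ (1 - α)) < p j ^ α := by
        rw [hsplit j]
        have := Real.rpow_lt_rpow_of_neg (hp j) hj (by linarith : α - 1 < 0)
        rw [hinv] at this
        exact mul_lt_mul_of_pos_left this (hp j)
      have hsumlt : (N:ℝ) ^ (1 - α) < ∑ i, p i ^ α := by
        calc (N:ℝ) ^ (1 - α) = ∑ i, p i * ((N:ℝ) ^ (1 - α)) := by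
              rw [← Finset.sum_mul, hps, one_mul]
          _ < ∑ i, p i ^ α :=
              Finset.sum_lt_sum (fun i _ => hterm i) ⟨j, Finset.mem_univ j, hstrict⟩
      have hlog : (1 - α) * Real.logb 2 N < Real.logb 2 (∑ i, p i ^ α) := by
        rw [← hlogc α]
        exact Real.logb_lt_logb one_lt_two hcpos hsumlt
      have h1α : 0 < 1 - α := by linarith
      rw [gt_iff_lt, one_div_mul_eq_div, lt_div_iff₀ h1α]
      linarith
    · -- α > 1
      have hterm : ∀ i : Fin r, p i ^ α ≤ p i * ((N:ℝ) ^ (1 - α)) := by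
        intro i
        rw [hsplit i]
        have := Real.rpow_le_rpow (hp i).le (hmax i) (by linarith : (0:ℝ) ≤ α - 1)
        rw [hinv] at this
        exact mul_le_mul_of_nonneg_left this (hp i).le
      have hstrict : p j ^ α < p j * ((N:ℝ) ^ (1 - α)) := by
        rw [hsplit j]
        have := Real.rpow_lt_rpow (hp j).le hj (by linarith : (0:ℝ) < α - 1)
        rw [hinv] at this
        exact mul_lt_mul_of_pos_left this (hp j)
      have hsumlt : (∑ i, p i ^ α) < (N:ℝ) ^ (1 - α) := by
        calc (∑ i, p i ^ α) < ∑ i, p i * ((N:ℝ) ^ (1 - α)) :=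
              Finset.sum_lt_sum (fun i _ => hterm i) ⟨j, Finset.mem_univ j, hstrict⟩
          _ = (N:ℝ) ^ (1 - α) := by rw [← Finset.sum_mul, hps, one_mul]
      have hspos : (0:ℝ) < ∑ i, p i ^ α := by
        haveI : Nonempty (Fin r) := ⟨⟨0, by omega⟩⟩
        exact Finset.sum_pos (fun i _ => Real.rpow_pos_of_pos (hp i) α) Finset.univ_nonempty
      have hlog : Real.logb 2 (∑ i, p i ^ α) < (1 - α) * Real.logb 2 N := by
        rw [← hlogc α]
        exact Real.logb_lt_logb one_lt_two hspos hsumlt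
      have h1α : 1 - α < 0 := by linarith
      rw [gt_iff_lt, one_div_mul_eq_div, lt_div_iff_of_neg h1α]
      linarith
  · intro α hα hα1
    have hNe : (1:ℝ) - α ≠ 0 := fun h => hα1 (by linarith)
    have hsum : (∑ i : Fin r, (if (i : ℕ) < N then (1 / (N : ℝ)) else 0) ^ α)
        = (N:ℝ) ^ ((1:ℝ) - α) := by
      have h1 : ∀ i : Fin r, (if (i : ℕ) < N then (1 / (N : ℝ)) else 0) ^ α
          = if (i : ℕ) < N then ((N:ℝ)⁻¹) ^ α else 0 := by
        intro i
        split <;> simp [Real.zero_rpow hα.ne']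
      simp_rw [h1]
      rw [Fin.sum_univ_eq_sum_range (fun i => if i < N then ((N:ℝ)⁻¹) ^ α else 0) r]
      rw [← Finset.sum_subset (Finset.range_subset_range.2 hr.le)
        (fun x _ hx => by simp [Finset.mem_range, not_lt] at hx ⊢; omega)]
      rw [Finset.sum_ite_of_true (fun x hx => Finset.mem_range.1 hx),
        Finset.sum_const, Finset.card_range, nsmul_eq_mul]
      rw [← Real.rpow_neg_one, ← Real.rpow_mul hN0.le, neg_one_mul,
        show (1:ℝ) - α = 1 + (-α) by ring, Real.rpow_add hN0, Real.rpow_one]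
    rw [hsum, hlogc]
    field_simp
end
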